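/- Let C be a k-dimensional ZMod 2-linear subspace of (Fin n → ZMod 2), fix a coordinate l₀, and let p : Fin n → ℝ be a probability vector with p l₀ ≥ 1/2, so that the most probable vector x_max for p satisfies x_max l₀ = 1. Let p' agree with p off l₀ and satisfy 0 ≤ p' l₀ ≤ 1/2 with 1/2 − p' l₀ ≥ p l₀ − 1/2, and let x_max' be the vector equal to x_max except with a 0 in coordinate l₀ (the most probable vector for p'). Then P_{p'}[x_max' + C] ≥ P_p[x_max + C]; that is, reflecting a single coordinate 1-probability from above 1/2 to a value at most as close to 1/2 does not decrease the probability of the most probable coset. -/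
import Mathlib

open Classical in
/-- Probability of a set of bit-vectors under independent, not necessarily identically
distributed bits with coordinate 1-probabilities `p`. -/
noncomputable def probOf {n : ℕ} (p : Fin n → ℝ) (S : Set (Fin n → ZMod 2)) : ℝ :=
  ∑ x : Fin n → ZMod 2,
    if x ∈ S then (∏ i, if x i = 1 then p i else 1 - p i) else 0

noncomputable def chi (a : ZMod 2) : ℝ := if a = 1 then -1 else 1

lemma zmod2_cases (a : ZMod 2) : a = 0 ∨ a = 1 := by revert a; decide

lemma chi_zero : chi 0 = 1 := by
  show (if (0 : ZMod 2) = 1 then (-1 : ℝ) else 1) = 1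
  rw [if_neg (by decide)]

lemma chi_one : chi 1 = -1 := by
  show (if (1 : ZMod 2) = 1 then (-1 : ℝ) else 1) = -1
  rw [if_pos rfl]

lemma chi_add (a b : ZMod 2) : chi (a + b) = chi a * chi b := by
  rcases zmod2_cases a with ha | ha <;> rcases zmod2_cases b with hb | hb <;>
    subst ha <;> subst hb
  all_goals first
    | (rw [show (0 : ZMod 2) + 0 = 0 from by decide, chi_zero]; ring)
    | (rw [show (0 : ZMod 2) + 1 = 1 from by decide, chi_zero, chi_one]; ring)
    | (rw [show (1 : ZMod 2) + 0 = 1 from by decide, chi_zero, chi_one]; ring)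
    | (rw [show (1 : ZMod 2) + 1 = 0 from by decide, chi_zero, chi_one]; ring)

lemma chi_sum {ι : Type*} (T : Finset ι) (f : ι → ZMod 2) :
    chi (∑ i ∈ T, f i) = ∏ i ∈ T, chi (f i) := by
  induction T using Finset.cons_induction with
  | empty => simp [chi_zero]
  | cons a T ha ih => rw [Finset.sum_cons, Finset.prod_cons, chi_add, ih]

open Classical in
lemma chi_sum_nonneg {n : ℕ} (C : Submodule (ZMod 2) (Fin n → ZMod 2))
    (L : (Fin n → ZMod 2) → ZMod 2) (hL : ∀ a b, L (a + b) = L a + L b) :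
    0 ≤ ∑ c ∈ Finset.univ.filter (· ∈ C), chi (L c) := by
  by_cases h : ∃ c₀, c₀ ∈ C ∧ L c₀ = 1
  · obtain ⟨c₀, hc₀, hL₀⟩ := h
    have h2 : ∀ x : Fin n → ZMod 2, x + x = 0 := by
      intro x; funext i
      rcases zmod2_cases (x i) with h | h <;>
        simp [Pi.add_apply, h, (by decide : (1 : ZMod 2) + 1 = 0)]
    have key : ∑ c ∈ Finset.univ.filter (· ∈ C), chi (L (c + c₀))
        = ∑ c ∈ Finset.univ.filter (· ∈ C), chi (L c) := by
      refine Finset.sum_equiv (Equiv.addRight c₀) ?_ ?_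
      · intro c
        simp only [Finset.mem_filter, Finset.mem_univ, true_and, Equiv.coe_addRight]
        constructor
        · intro hc; exact C.add_mem hc hc₀
        · intro hc
          have := C.add_mem hc hc₀
          rwa [add_assoc, h2, add_zero] at this
      · intro c _; rfl
    have key2 : ∀ c, chi (L (c + c₀)) = - chi (L c) := by
      intro c; rw [hL, hL₀, chi_add, chi_one]; ring
    have key3 : ∑ c ∈ Finset.univ.filter (· ∈ C), chi (L c)
        = - ∑ c ∈ Finset.univ.filter (· ∈ C), chi (L c) := by
      conv_lhs => rw [← key]
      simp_rw [key2]
      rw [Finset.sum_neg_distrib]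
    linarith
  · push_neg at h
    apply Finset.sum_nonneg
    intro c hc
    rw [Finset.mem_filter] at hc
    rcases zmod2_cases (L c) with h0 | h1
    · rw [h0, chi_zero]; norm_num
    · exact absurd h1 (h c hc.2)

open Classical in
lemma core_nonneg {n : ℕ} (C : Submodule (ZMod 2) (Fin n → ZMod 2)) (l₀ : Fin n)
    (β : Fin n → ℝ) (hβ : ∀ i, 0 ≤ β i) :
    0 ≤ ∑ c ∈ Finset.univ.filter (· ∈ C),
        chi (c l₀) * ∏ i ∈ Finset.univ.erase l₀, (1 / 2 + β i * chi (c i)) := by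
  have expand : ∀ c : Fin n → ZMod 2,
      chi (c l₀) * ∏ i ∈ Finset.univ.erase l₀, (1 / 2 + β i * chi (c i))
      = ∑ T ∈ (Finset.univ.erase l₀).powerset,
          ((∏ i ∈ T, β i) * ∏ i ∈ Finset.univ.erase l₀ \ T, (1 / 2 : ℝ))
            * chi (c l₀ + ∑ i ∈ T, c i) := by
    intro c
    have h1 : ∀ i ∈ Finset.univ.erase l₀,
        (1 / 2 + β i * chi (c i)) = (β i * chi (c i)) + 1 / 2 := fun i _ => by ring
    rw [Finset.prod_congr rfl h1, Finset.prod_add, Finset.mul_sum]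
    refine Finset.sum_congr rfl fun T hT => ?_
    rw [Finset.prod_mul_distrib, ← chi_sum, chi_add]
    ring
  simp_rw [expand]
  rw [Finset.sum_comm]
  apply Finset.sum_nonneg
  intro T hT
  simp_rw [mul_comm, ← Finset.sum_mul]
  apply mul_nonneg
  · exact chi_sum_nonneg C _ (fun a b => by
      simp only [Pi.add_apply, Finset.sum_add_distrib]; ring)
  · exact mul_nonneg (Finset.prod_nonneg fun i _ => hβ i)
      (Finset.prod_nonneg fun i _ => by norm_num)

/-- Reflecting a single coordinate 1-probability from above `1/2` to a value at
most as close to `1/2` does not decrease the probability of the most probable coset. -/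
theorem reflect_coordinate_prob {n k : ℕ}
    (C : Submodule (ZMod 2) (Fin n → ZMod 2))
    (hk : Module.finrank (ZMod 2) C = k)
    (l₀ : Fin n) (p p' : Fin n → ℝ)
    (hp : ∀ i, 0 ≤ p i ∧ p i ≤ 1)
    (hpl : 1 / 2 ≤ p l₀)
    (xmax : Fin n → ZMod 2)
    (hxmax : ∀ i, xmax i = if (1 : ℝ) / 2 ≤ p i then 1 else 0)
    (hagree : ∀ j, j ≠ l₀ → p' j = p j)
    (h0 : 0 ≤ p' l₀) (h12 : p' l₀ ≤ 1 / 2)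
    (hrefl : p l₀ - 1 / 2 ≤ 1 / 2 - p' l₀) :
    probOf p ((xmax + ·) '' (C : Set _)) ≤
      probOf p' ((Function.update xmax l₀ 0 + ·) '' (C : Set _)) := by
  classical
  set F : Finset (Fin n → ZMod 2) := Finset.univ.filter (· ∈ C) with hF
  set β : Fin n → ℝ := fun i => if (1 : ℝ) / 2 ≤ p i then p i - 1 / 2 else 1 / 2 - p i with hβdef
  have hβ : ∀ i, 0 ≤ β i := by
    intro i
    by_cases h : (1 : ℝ) / 2 ≤ p i <;> simp only [hβdef, h, if_true, if_false] <;> linarith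
  set r : (Fin n → ZMod 2) → ℝ :=
    fun c => ∏ i ∈ Finset.univ.erase l₀, (1 / 2 + β i * chi (c i)) with hr
  -- probability of a coset as a sum over the submodule
  have himg : ∀ (q : Fin n → ℝ) (a : Fin n → ZMod 2),
      probOf q ((a + ·) '' (C : Set _))
        = ∑ c ∈ F, ∏ i, (if (a + c) i = 1 then q i else 1 - q i) := by
    intro q a
    have h1 : ∀ x : Fin n → ZMod 2,
        (x ∈ ((a + ·) '' (C : Set _))) ↔ x ∈ F.image (fun c => a + c) := by
      intro x; simp [hF]
    unfold probOf
    simp only [h1]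
    rw [Finset.sum_ite_mem, Finset.univ_inter, Finset.sum_image]
    intro x _ y _ h
    exact add_left_cancel h
  have hxl : xmax l₀ = 1 := by rw [hxmax l₀, if_pos hpl]
  -- factor identity at each coordinate
  have hfac : ∀ (c : Fin n → ZMod 2) (i : Fin n),
      (if (xmax + c) i = 1 then p i else 1 - p i) = 1 / 2 + β i * chi (c i) := by
    intro c i
    have hx := hxmax i
    rcases zmod2_cases (c i) with h | h <;> by_cases hpi : (1 : ℝ) / 2 ≤ p i <;>
      simp only [Pi.add_apply, hx, hpi, if_true, if_false, h, hβdef, chi,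
        add_zero, (by decide : (1 : ZMod 2) + 1 = 0), (by decide : (0 : ZMod 2) + 1 = 1),
        zero_add] <;>
      norm_num [(by decide : (0 : ZMod 2) ≠ 1)] <;> ring
  -- factorization of the weight of xmax + c
  have hw : ∀ c : Fin n → ZMod 2,
      (∏ i, if (xmax + c) i = 1 then p i else 1 - p i)
        = (if c l₀ = 0 then p l₀ else 1 - p l₀) * r c := by
    intro c
    rw [← Finset.mul_prod_erase Finset.univ _ (Finset.mem_univ l₀)]
    congr 1
    · rcases zmod2_cases (c l₀) with h | h <;>
        simp [Pi.add_apply, hxl, h, (by decide : (1 : ZMod 2) + 1 = 0),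
          (by decide : (0 : ZMod 2) ≠ 1)]
    · exact Finset.prod_congr rfl fun i _ => hfac c i
  -- factorization of the weight of xmax' + c
  have hw' : ∀ c : Fin n → ZMod 2,
      (∏ i, if (Function.update xmax l₀ 0 + c) i = 1 then p' i else 1 - p' i)
        = (if c l₀ = 1 then p' l₀ else 1 - p' l₀) * r c := by
    intro c
    rw [← Finset.mul_prod_erase Finset.univ _ (Finset.mem_univ l₀)]
    congr 1
    · simp [Pi.add_apply, Function.update_self]
    · refine Finset.prod_congr rfl fun i hi => ?_
      have hi' : i ≠ l₀ := Finset.ne_of_mem_erase hi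
      rw [Pi.add_apply, Function.update_of_ne hi', hagree i hi', ← Pi.add_apply xmax c]
      exact hfac c i
  rw [himg p xmax, himg p' (Function.update xmax l₀ 0)]
  rw [Finset.sum_congr rfl (fun c _ => hw c), Finset.sum_congr rfl (fun c _ => hw' c)]
  rw [← sub_nonneg, ← Finset.sum_sub_distrib]
  have key : ∀ c ∈ F,
      (if c l₀ = 1 then p' l₀ else 1 - p' l₀) * r c
        - (if c l₀ = 0 then p l₀ else 1 - p l₀) * r c
      = (1 - p l₀ - p' l₀) * (chi (c l₀) * r c) := by
    intro c _
    rcases zmod2_cases (c l₀) with h | h <;>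
      simp only [h, chi, if_true, if_false, (by decide : (0 : ZMod 2) ≠ 1), ite_true,
        ite_false] <;>
      norm_num <;> ring
  rw [Finset.sum_congr rfl key, ← Finset.mul_sum]
  apply mul_nonneg (by linarith)
  exact core_nonneg C l₀ β hβ
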